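/- Assume the differential inequality d⁺x/dt ≤ -νx + Gx² on [0,T) with x continuous, x ≥ 0, x(0) = r₀, ν ≥ 0, G > 0. Then x(t) ≤ r₀ e^{-νt}/(1 - G r₀ e_ν(t)) for all t in [0, min(T, T_c)), where T_c is the blow-up time of the comparison logistic equation and e_ν(t) = (1-e^{-νt})/ν (= t if ν = 0). -/

import Mathlib

open scoped ENNReal

noncomputable def diniDeriv (φ : ℝ → ℝ) (t : ℝ) : EReal :=
  Filter.limsup (fun h : ℝ => (((φ (t+h) - φ t)/h : ℝ) : EReal))
    (nhdsWithin 0 (Set.Ioi 0))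

/-- `e_ν(t) := (1 - e^{-νt})/ν` for `ν > 0`, `e_ν(t) := t` for `ν = 0`. -/
noncomputable def enu (ν t : ℝ) : ℝ :=
  if ν = 0 then t else (1 - Real.exp (-(ν*t)))/ν

lemma enu_zero (ν : ℝ) : enu ν 0 = 0 := by
  rcases eq_or_ne ν 0 with h|h <;> simp [enu, h]

lemma hasDerivAt_enu (ν t : ℝ) : HasDerivAt (enu ν) (Real.exp (-(ν*t))) t := by
  rcases eq_or_ne ν 0 with h|h
  · have : enu ν = fun s : ℝ => s := by funext s; simp [enu, h]
    rw [this, h]; simpa using hasDerivAt_id' t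
  · have he : enu ν = fun s => (1 - Real.exp (-(ν*s)))/ν := by funext s; simp [enu, h]
    rw [he]
    have h1 : HasDerivAt (fun s : ℝ => -(ν*s)) (-(ν*1)) t :=
      ((hasDerivAt_id t).const_mul ν).neg
    have h2 := (h1.exp.const_sub 1).div_const ν
    refine h2.congr_deriv ?_
    field_simp

lemma dini_slope {x : ℝ → ℝ} {t c : ℝ} (h : diniDeriv x t ≤ ((c:ℝ):EReal)) :
    ∀ r : ℝ, c < r → ∃ᶠ z in nhdsWithin t (Set.Ioi t), slope x t z < r := by
  intro r hr
  have hlt : diniDeriv x t < ((r:ℝ):EReal) :=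
    lt_of_le_of_lt h (by exact_mod_cast hr)
  have hev : ∀ᶠ h' in nhdsWithin 0 (Set.Ioi 0),
      (((x (t+h') - x t)/h' : ℝ) : EReal) < ((r:ℝ):EReal) :=
    Filter.eventually_lt_of_limsup_lt hlt
  have hmap : Filter.Tendsto (fun z : ℝ => z - t)
      (nhdsWithin t (Set.Ioi t)) (nhdsWithin 0 (Set.Ioi 0)) := by
    have hc : ContinuousWithinAt (fun z : ℝ => z - t) (Set.Ioi t) t :=
      ((continuous_id.sub continuous_const).continuousAt).continuousWithinAt
    have hM : Set.MapsTo (fun z : ℝ => z - t) (Set.Ioi t) (Set.Ioi 0) :=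
      fun z hz => Set.mem_Ioi.mpr (sub_pos.mpr (Set.mem_Ioi.mp hz))
    have := hc.tendsto_nhdsWithin hM
    simpa using this
  have hev2 : ∀ᶠ z in nhdsWithin t (Set.Ioi t), slope x t z < r := by
    filter_upwards [hmap.eventually hev, self_mem_nhdsWithin] with z hz hz'
    rw [slope_def_field]
    have hzt : t + (z - t) = z := by ring
    rw [hzt] at hz
    exact_mod_cast hz
  exact hev2.frequently

noncomputable def Bfun (ν G r₀ s : ℝ) : ℝ :=
  r₀ * Real.exp (-(ν*s)) / (1 - G*r₀*enu ν s)

lemma Bfun_zero (ν G r₀ : ℝ) : Bfun ν G r₀ 0 = r₀ := by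
  simp [Bfun, enu_zero]

lemma hasDerivAt_Bf (ν G r₀ t : ℝ) (hD : 1 - G*r₀*enu ν t ≠ 0) :
    HasDerivAt (Bfun ν G r₀)
      (-ν * Bfun ν G r₀ t + G * (Bfun ν G r₀ t)^2) t := by
  have h1 : HasDerivAt (fun s : ℝ => -(ν*s)) (-(ν*1)) t :=
    ((hasDerivAt_id t).const_mul ν).neg
  have hnum : HasDerivAt (fun s => r₀ * Real.exp (-(ν*s)))
      (r₀ * (Real.exp (-(ν*t)) * (-(ν*1)))) t := h1.exp.const_mul r₀
  have hden : HasDerivAt (fun s => 1 - G*r₀*enu ν s) (-(G*r₀*Real.exp (-(ν*t)))) t := by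
    have h2 := ((hasDerivAt_enu ν t).const_mul (G*r₀)).const_sub 1
    convert h2 using 1
  have hdiv := hnum.div hden hD
  unfold Bfun
  refine hdiv.congr_deriv ?_
  field_simp
  ring

lemma continuous_Bden (ν G r₀ : ℝ) : Continuous (fun s => 1 - G*r₀*enu ν s) := by
  have henuc : Continuous (enu ν) :=
    continuous_iff_continuousAt.mpr fun s => (hasDerivAt_enu ν s).continuousAt
  exact continuous_const.sub (continuous_const.mul henuc)

open scoped Classical in
lemma Dpos (ν G r₀ : ℝ) (hν : 0 ≤ ν) (hG : 0 < G) (hr : 0 ≤ r₀)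
    (Tc : ℝ≥0∞)
    (hTc : Tc = if 0 < ν ∧ r₀ ≤ ν/G then ⊤
      else if 0 < ν then ENNReal.ofReal (-(1/ν) * Real.log (1 - ν/(G*r₀)))
      else if r₀ = 0 then ⊤ else ENNReal.ofReal (1/(G*r₀)))
    (t : ℝ) (ht : 0 ≤ t) (hlt : ENNReal.ofReal t < Tc) :
    0 < 1 - G * r₀ * enu ν t := by
  rcases le_or_gt ν 0 with h0 | hν'
  · have hν0 : ν = 0 := le_antisymm h0 hν
    subst hν0
    simp only [lt_irrefl, false_and, if_false] at hTc
    rw [show enu 0 t = t by simp [enu]]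
    rcases eq_or_ne r₀ 0 with hr0 | hr0
    · simp [hr0]
    · rw [if_neg hr0] at hTc
      rw [hTc, ENNReal.ofReal_lt_ofReal_iff_of_nonneg ht] at hlt
      have hGr : 0 < G * r₀ := mul_pos hG (lt_of_le_of_ne hr (Ne.symm hr0))
      have := (lt_div_iff₀ hGr).mp hlt
      nlinarith
  · have he : enu ν t = (1 - Real.exp (-(ν*t)))/ν := by
      simp [enu, ne_of_gt hν']
    have hepos : 0 < Real.exp (-(ν*t)) := Real.exp_pos _
    have hele : Real.exp (-(ν*t)) ≤ 1 := by
      rw [Real.exp_le_one_iff]; nlinarith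
    rcases le_or_gt r₀ (ν/G) with hle | hgt
    · have hGr : G * r₀ ≤ ν := by
        rw [le_div_iff₀ hG] at hle; linarith
      rw [he]
      have h1 : G * r₀ * ((1 - Real.exp (-(ν*t)))/ν) ≤ 1 - Real.exp (-(ν*t)) := by
        rw [mul_div_assoc'] ; rw [div_le_iff₀ hν']
        nlinarith
      nlinarith
    · rw [if_neg (by push_neg; intro _; linarith), if_pos hν'] at hTc
      have hr0 : 0 < r₀ := lt_of_le_of_lt (div_nonneg hν hG.le) hgt
      have hGr : 0 < G * r₀ := mul_pos hG hr0
      have hνlt : ν < G * r₀ := by rw [div_lt_iff₀ hG] at hgt; linarith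
      have ha0 : 0 < 1 - ν/(G*r₀) := by
        rw [sub_pos, div_lt_one hGr]; exact hνlt
      rw [hTc, ENNReal.ofReal_lt_ofReal_iff_of_nonneg ht] at hlt
      have hlog : Real.log (1 - ν/(G*r₀)) < -(ν*t) := by
        have h3 : ν * t < ν * (-(1/ν) * Real.log (1 - ν/(G*r₀))) :=
          mul_lt_mul_of_pos_left hlt hν'
        have h4 : ν * (-(1/ν) * Real.log (1 - ν/(G*r₀))) = - Real.log (1 - ν/(G*r₀)) := by
          field_simp
        rw [h4] at h3; linarith
      have hae : 1 - ν/(G*r₀) < Real.exp (-(ν*t)) := by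
        calc 1 - ν/(G*r₀) = Real.exp (Real.log (1 - ν/(G*r₀))) := (Real.exp_log ha0).symm
        _ < Real.exp (-(ν*t)) := Real.exp_lt_exp.mpr hlog
      rw [he]
      have key : G * r₀ * (1 - Real.exp (-(ν*t))) < ν := by
        have h2 : 1 - Real.exp (-(ν*t)) < ν/(G*r₀) := by linarith
        calc G * r₀ * (1 - Real.exp (-(ν*t))) < G * r₀ * (ν/(G*r₀)) :=
              mul_lt_mul_of_pos_left h2 hGr
        _ = ν := by field_simp
      rw [mul_div_assoc']
      have hlt1 : G * r₀ * (1 - Real.exp (-(ν*t))) / ν < 1 := (div_lt_one hν').mpr key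
      linarith

open scoped Classical in
/-- If `x ≥ 0` is continuous on `[0,T)` with `x(0) = r₀` and
`d⁺x/dt ≤ -νx + Gx²`, then `x(t) ≤ r₀ e^{-νt}/(1 - G r₀ e_ν(t))` on
`[0, min(T,T_c))`, `T_c` being the blow-up time of the comparison logistic
equation. -/
theorem stmt19 (ν G r₀ : ℝ) (hν : 0 ≤ ν) (hG : 0 < G) (hr : 0 ≤ r₀)
    (T Tc : ℝ≥0∞) (hT : 0 < T)
    (hTc : Tc = if 0 < ν ∧ r₀ ≤ ν/G then ⊤
      else if 0 < ν then ENNReal.ofReal (-(1/ν) * Real.log (1 - ν/(G*r₀)))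
      else if r₀ = 0 then ⊤ else ENNReal.ofReal (1/(G*r₀)))
    (x : ℝ → ℝ)
    (hxc : ContinuousOn x {t : ℝ | 0 ≤ t ∧ ENNReal.ofReal t < T})
    (hxpos : ∀ t : ℝ, 0 ≤ t → ENNReal.ofReal t < T → 0 ≤ x t)
    (hx0 : x 0 = r₀)
    (hdini : ∀ t : ℝ, 0 ≤ t → ENNReal.ofReal t < T →
      diniDeriv x t ≤ ((-ν * x t + G * (x t)^2 : ℝ) : EReal)) :
    ∀ t : ℝ, 0 ≤ t → ENNReal.ofReal t < T → ENNReal.ofReal t < Tc →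
      x t ≤ r₀ * Real.exp (-(ν*t)) / (1 - G * r₀ * enu ν t) := by
  intro t₀ ht₀ hT₀ hTc₀
  have hDpos : ∀ s ∈ Set.Icc (0:ℝ) t₀, 0 < 1 - G*r₀*enu ν s := by
    intro s hs
    exact Dpos ν G r₀ hν hG hr Tc hTc s hs.1
      (lt_of_le_of_lt (ENNReal.ofReal_le_ofReal hs.2) hTc₀)
  -- continuity of Bfun on Icc
  have hnumc : Continuous (fun s : ℝ => r₀ * Real.exp (-(ν*s))) := by
    exact continuous_const.mul ((continuous_const.mul continuous_id).neg.rexp)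
  have hBfc : ContinuousOn (Bfun ν G r₀) (Set.Icc 0 t₀) := by
    apply ContinuousOn.div hnumc.continuousOn (continuous_Bden ν G r₀).continuousOn
    exact fun s hs => (hDpos s hs).ne'
  have hne : (Set.Icc (0:ℝ) t₀).Nonempty := ⟨0, le_rfl, ht₀⟩
  obtain ⟨z, hz, hzmax'⟩ := isCompact_Icc.exists_isMaxOn hne hBfc
  have hzmax : ∀ s ∈ Set.Icc (0:ℝ) t₀, Bfun ν G r₀ s ≤ Bfun ν G r₀ z := hzmax'
  set M₀ : ℝ := max (Bfun ν G r₀ z) 0 + 1 with hM₀def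
  have hM₀1 : 1 ≤ M₀ := by
    have := le_max_right (Bfun ν G r₀ z) 0; simp only [hM₀def]; linarith
  have hM₀0 : 0 < M₀ := lt_of_lt_of_le one_pos hM₀1
  have hBfM : ∀ s ∈ Set.Icc (0:ℝ) t₀, Bfun ν G r₀ s ≤ M₀ := by
    intro s hs
    have := hzmax s hs
    have h2 := le_max_left (Bfun ν G r₀ z) 0
    simp only [hM₀def]; linarith
  have hK0 : 0 < ν + 2*G*M₀ := by nlinarith
  -- continuity of x on Icc 0 t₀
  have hxcI : ContinuousOn x (Set.Icc 0 t₀) :=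
    hxc.mono fun s hs => ⟨hs.1, lt_of_le_of_lt (ENNReal.ofReal_le_ofReal hs.2) hT₀⟩
  -- slope condition
  have hf' : ∀ s ∈ Set.Ico (0:ℝ) t₀, ∀ r : ℝ,
      (fun s => -ν * x s + G * (x s)^2) s < r →
      ∃ᶠ w in nhdsWithin s (Set.Ioi s), slope x s w < r := by
    intro s hs
    exact dini_slope (hdini s hs.1
      (lt_of_le_of_lt (ENNReal.ofReal_le_ofReal hs.2.le) hT₀))
  -- main estimate for each small δ
  have main : ∀ δ : ℝ, 0 < δ → δ * Real.exp (2*(ν+2*G*M₀)*t₀) ≤ 1 →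
      x t₀ ≤ Bfun ν G r₀ t₀ + δ * Real.exp (2*(ν+2*G*M₀)*t₀) := by
    intro δ hδ hδ1
    have hcomp := image_le_of_liminf_slope_right_lt_deriv_boundary'
      (f := x) (f' := fun s => -ν * x s + G * (x s)^2) (a := 0) (b := t₀)
      (B := fun s => Bfun ν G r₀ s + δ * Real.exp (2*(ν+2*G*M₀)*s))
      (B' := fun s => (-ν * Bfun ν G r₀ s + G * (Bfun ν G r₀ s)^2)
        + δ * (2*(ν+2*G*M₀) * Real.exp (2*(ν+2*G*M₀)*s)))
      hxcI hf'
      (by -- x 0 ≤ B 0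
        show x 0 ≤ Bfun ν G r₀ 0 + δ * Real.exp (2*(ν+2*G*M₀)*0)
        rw [hx0, Bfun_zero]
        have : Real.exp (2*(ν+2*G*M₀)*0) = 1 := by norm_num
        rw [this]; nlinarith)
      (by -- continuity of B
        exact hBfc.add
          ((continuous_const.mul ((continuous_const.mul continuous_id).rexp)).continuousOn))
      (by -- derivative of B
        intro s hs
        have hBd := hasDerivAt_Bf ν G r₀ s
          (hDpos s ⟨hs.1, hs.2.le⟩).ne'
        have hed : HasDerivAt (fun w : ℝ => δ * Real.exp (2*(ν+2*G*M₀)*w))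
            (δ * (2*(ν+2*G*M₀) * Real.exp (2*(ν+2*G*M₀)*s))) s := by
          have h0 : HasDerivAt (fun w : ℝ => 2*(ν+2*G*M₀)*w) (2*(ν+2*G*M₀)) s := by
            simpa using (hasDerivAt_id s).const_mul (2*(ν+2*G*M₀))
          have := h0.exp.const_mul δ
          refine this.congr_deriv ?_
          ring
        exact (hBd.add hed).hasDerivWithinAt)
      (by -- strict inequality at contact points
        intro s hs hxB
        have hE : (0:ℝ) < Real.exp (2*(ν+2*G*M₀)*s) := Real.exp_pos _
        have hEt : Real.exp (2*(ν+2*G*M₀)*s) ≤ Real.exp (2*(ν+2*G*M₀)*t₀) :=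
          Real.exp_le_exp.mpr (by nlinarith [hs.2.le, hs.1])
        have hδE : δ * Real.exp (2*(ν+2*G*M₀)*s) ≤ 1 := by nlinarith
        have hBM : Bfun ν G r₀ s ≤ M₀ := hBfM s ⟨hs.1, hs.2.le⟩
        rw [hxB]
        set P := δ * Real.exp (2*(ν+2*G*M₀)*s) with hP
        have hP0 : 0 < P := mul_pos hδ hE
        set Bs := Bfun ν G r₀ s with hBs
        -- goal: -ν*(Bs+P) + G*(Bs+P)^2 < (-ν*Bs + G*Bs^2) + 2*(ν+2GM₀)*P
        have hgoal : -ν*(Bs+P) + G*(Bs+P)^2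
            < (-ν*Bs + G*Bs^2) + δ * (2*(ν+2*G*M₀) * Real.exp (2*(ν+2*G*M₀)*s)) := by
          have h1 : δ * (2*(ν+2*G*M₀) * Real.exp (2*(ν+2*G*M₀)*s)) = 2*(ν+2*G*M₀)*P := by
            rw [hP]; ring
          rw [h1]
          nlinarith [mul_nonneg (mul_nonneg hG.le hP0.le) (sub_nonneg.mpr hBM),
            mul_nonneg (mul_nonneg hG.le hP0.le) (sub_nonneg.mpr hδE),
            mul_nonneg (mul_nonneg hG.le hP0.le) (sub_nonneg.mpr hM₀1),
            mul_pos (mul_pos hG hM₀0) hP0,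
            mul_nonneg hν hP0.le]
        calc -ν * (Bs + P) + G * (Bs + P)^2
            < (-ν*Bs + G*Bs^2) + δ * (2*(ν+2*G*M₀) * Real.exp (2*(ν+2*G*M₀)*s)) := hgoal
          _ = _ := by rfl)
      ⟨ht₀, le_rfl⟩
    simpa using hcomp
  -- take δ → 0
  have hfin : ∀ ε > (0:ℝ), x t₀ ≤ Bfun ν G r₀ t₀ + ε := by
    intro ε hε
    set Et := Real.exp (2*(ν+2*G*M₀)*t₀) with hEt
    have hEt0 : 0 < Et := Real.exp_pos _
    have hδ0 : 0 < min ε 1 / Et := by positivity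
    have h1 : (min ε 1 / Et) * Et ≤ 1 := by
      rw [div_mul_cancel₀ _ hEt0.ne']; exact min_le_right _ _
    have h2 : (min ε 1 / Et) * Et ≤ ε := by
      rw [div_mul_cancel₀ _ hEt0.ne']; exact min_le_left _ _
    have := main _ hδ0 h1
    linarith
  have : x t₀ ≤ Bfun ν G r₀ t₀ := le_of_forall_pos_le_add hfin
  exact this
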